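/- Let v, ṽ ∈ D2 be two orthogonal unit vectors. Then ⟨L(v,ṽ),L(v,ṽ)⟩ = τ holds if and only if ṽ ∈ V_v(τ). Moreover, if u ∈ V_v(0) is a unit vector and ⟨L(v,ṽ),L(v,ṽ)⟩ = τ, then u ∈ V_ṽ(τ). -/

import Mathlib

/-!
For a unit vector `b ∈ D₂` write `P_b x = K(b, L(b, x))`; the cubic form being totally symmetric,
`⟨P_b x, y⟩ = ⟨L(b, x), L(b, y)⟩`. Evaluating the parallelism identity at `(e₁, b, b, x)` gives
`K(x, L(b, b)) = ηλ₁⟨b, x⟩ b + (ηλ₁/2)⟨b, b⟩ x − 2 P_b x`, and evaluating it at `(b, x, b, b)` gives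
`P_b² = τ P_b` on `b^⊥ ∩ D₂`. Hence `⟨P_v ṽ, ṽ⟩ = |L(v, ṽ)|² = τ` forces `|P_v ṽ − τ ṽ|² = 0`,
which is the first claim.

For the second, `u ∈ V_v(0)` gives `|L(v, u)|² = ⟨P_v u, u⟩ = 0`, and the first identity then
yields `L(u, u) = L(v, v)` and `⟨L(v, v), L(ṽ, ṽ)⟩ = ηλ₁/2 − 2τ`. Pairing the first identity for
`b = ṽ`, `x = u` with `u` turns this into `⟨P_ṽ u, u⟩ = τ`, and the first claim applies to `ṽ`.
-/

open scoped RealInnerProductSpace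
open Module Submodule

noncomputable section

variable {V : Type*} [NormedAddCommGroup V] [InnerProductSpace ℝ V]

/-- The curvature-type operator built from `ε` and the difference tensor `K`:
`R(X,Y)Z = ε(⟨Y,Z⟩X − ⟨X,Z⟩Y) − K(X,K(Y,Z)) + K(Y,K(X,Z))`. -/
def Rc (ε : ℝ) (K : V →ₗ[ℝ] V →ₗ[ℝ] V) (X Y Z : V) : V :=
  ε • (⟪Y, Z⟫ • X - ⟪X, Z⟫ • Y) - K X (K Y Z) + K Y (K X Z)

/-- The bilinear map `L(v₁,v₂) = K(v₁,v₂) − (λ₁/2)⟨v₁,v₂⟩ e₁`. -/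
def Lop (lam1 : ℝ) (e1 : V) (K : V →ₗ[ℝ] V →ₗ[ℝ] V) (v1 v2 : V) : V :=
  K v1 v2 - (lam1 / 2 * ⟪v1, v2⟫) • e1

/-- The distribution `D₂ = {v : v ⟂ e₁, K(e₁,v) = (λ₁/2)v}`. -/
def D2s (lam1 : ℝ) (e1 : V) (K : V →ₗ[ℝ] V →ₗ[ℝ] V) : Submodule ℝ V :=
  (ℝ ∙ e1)ᗮ ⊓ Module.End.eigenspace (K e1) (lam1 / 2)

/-- The distribution `D₃ = {w : w ⟂ e₁, K(e₁,w) = μw}`. -/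
def D3s (mu : ℝ) (e1 : V) (K : V →ₗ[ℝ] V →ₗ[ℝ] V) : Submodule ℝ V :=
  (ℝ ∙ e1)ᗮ ⊓ Module.End.eigenspace (K e1) mu

/-- The operator `P_v(ṽ) = K(v, L(v,ṽ))`, as a linear endomorphism of `V`. -/
def Pop (lam1 : ℝ) (e1 : V) (K : V →ₗ[ℝ] V →ₗ[ℝ] V) (v : V) : V →ₗ[ℝ] V :=
  (K v) ∘ₗ (K v - (lam1 / 2) •
    ((LinearMap.toSpanSingleton ℝ V e1) ∘ₗ (innerSL ℝ v).toLinearMap))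

/-- The eigenspace `V_v(c)` of `P_v` within the orthogonal complement of `v` in `D₂`. -/
def Vvs (lam1 c : ℝ) (e1 : V) (K : V →ₗ[ℝ] V →ₗ[ℝ] V) (v : V) : Submodule ℝ V :=
  D2s lam1 e1 K ⊓ (ℝ ∙ v)ᗮ ⊓ Module.End.eigenspace (Pop lam1 e1 K v) c

theorem Pop_apply (lam1 : ℝ) (e1 : V) (K : V →ₗ[ℝ] V →ₗ[ℝ] V) (b x : V) :
    Pop lam1 e1 K b x = K b (Lop lam1 e1 K b x) := by
  simp only [Pop, Lop, LinearMap.comp_apply, LinearMap.sub_apply, LinearMap.smul_apply,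
    LinearMap.toSpanSingleton_apply, ContinuousLinearMap.coe_coe, innerSL_apply_apply, smul_smul]

theorem Rc_smul_add (ε : ℝ) (K : V →ₗ[ℝ] V →ₗ[ℝ] V) (X Y : V) (c : ℝ) (z₁ z₂ : V) :
    Rc ε K X Y (c • z₁ + z₂) = c • Rc ε K X Y z₁ + Rc ε K X Y z₂ := by
  simp only [Rc, inner_add_right, real_inner_smul_right, map_add, map_smul]
  module

section CaseC

variable {lam1 μ : ℝ} {e1 : V} {K : V →ₗ[ℝ] V →ₗ[ℝ] V}

theorem mem_Vvs_iff {c : ℝ} {b z : V} :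
    z ∈ Vvs lam1 c e1 K b ↔
      z ∈ D2s lam1 e1 K ∧ ⟪b, z⟫ = 0 ∧ K b (Lop lam1 e1 K b z) = c • z := by
  rw [Vvs, mem_inf, mem_inf, mem_orthogonal_singleton_iff_inner_right,
    Module.End.mem_eigenspace_iff, Pop_apply, and_assoc]

theorem K_eq_smul_add_Lop (a b : V) :
    K a b = (lam1 / 2 * ⟪a, b⟫) • e1 + Lop lam1 e1 K a b :=
  (add_sub_cancel _ _).symm

theorem Lop_comm (hKsymm : ∀ X Y : V, K X Y = K Y X) (a b : V) :
    Lop lam1 e1 K a b = Lop lam1 e1 K b a := by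
  rw [Lop, Lop, hKsymm, real_inner_comm]

theorem inner_e1_of_mem_D3s {z : V} (hz : z ∈ D3s μ e1 K) : ⟪e1, z⟫ = 0 :=
  mem_orthogonal_singleton_iff_inner_right.mp (mem_inf.mp hz).1

theorem K_e1_of_mem_D3s {z : V} (hz : z ∈ D3s μ e1 K) : K e1 z = μ • z :=
  Module.End.mem_eigenspace_iff.mp (mem_inf.mp hz).2

theorem inner_e1_of_mem_D2s {z : V} (hz : z ∈ D2s lam1 e1 K) : ⟪e1, z⟫ = 0 :=
  inner_e1_of_mem_D3s hz

theorem K_e1_of_mem_D2s {z : V} (hz : z ∈ D2s lam1 e1 K) : K e1 z = (lam1 / 2) • z :=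
  K_e1_of_mem_D3s hz

theorem inner_K_e1_e1_of_mem_D3s (hKcub : ∀ X Y Z : V, ⟪K X Y, Z⟫ = ⟪K X Z, Y⟫) {z : V}
    (hz : z ∈ D3s μ e1 K) : ⟪z, K e1 e1⟫ = 0 := by
  rw [real_inner_comm, hKcub, K_e1_of_mem_D3s hz, real_inner_smul_left, real_inner_comm,
    inner_e1_of_mem_D3s hz, mul_zero]

theorem K_e1_e1_eq_of_sup_eq_top (hKcub : ∀ X Y Z : V, ⟪K X Y, Z⟫ = ⟪K X Z, Y⟫)
    (he1 : ‖e1‖ = 1) (hsplit : (ℝ ∙ e1) ⊔ D2s lam1 e1 K ⊔ D3s μ e1 K = ⊤) :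
    K e1 e1 = ⟪K e1 e1, e1⟫ • e1 := by
  have hperp : K e1 e1 - ⟪K e1 e1, e1⟫ • e1 ∈ ((ℝ ∙ e1) ⊔ D2s lam1 e1 K ⊔ D3s μ e1 K)ᗮ := by
    rw [← Submodule.inf_orthogonal, ← Submodule.inf_orthogonal]
    refine mem_inf.mpr ⟨mem_inf.mpr ⟨?_, (mem_orthogonal _ _).mpr fun z hz => ?_⟩,
      (mem_orthogonal _ _).mpr fun z hz => ?_⟩
    · rw [mem_orthogonal_singleton_iff_inner_left, inner_sub_left, real_inner_smul_left,
        real_inner_self_eq_norm_sq, he1]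
      ring
    · rw [inner_sub_right, real_inner_smul_right, inner_K_e1_e1_of_mem_D3s hKcub hz,
        real_inner_comm e1 z, inner_e1_of_mem_D2s hz]
      ring
    · rw [inner_sub_right, real_inner_smul_right, inner_K_e1_e1_of_mem_D3s hKcub hz,
        real_inner_comm e1 z, inner_e1_of_mem_D3s hz]
      ring
  rw [hsplit, top_orthogonal_eq_bot, mem_bot, sub_eq_zero] at hperp
  exact hperp

theorem inner_K_eq_inner_Lop (hKcub : ∀ X Y Z : V, ⟪K X Y, Z⟫ = ⟪K X Z, Y⟫) {z : V}
    (hz : ⟪e1, z⟫ = 0) (a y : V) : ⟪K a z, y⟫ = ⟪z, Lop lam1 e1 K a y⟫ := by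
  rw [hKcub, K_eq_smul_add_Lop, inner_add_left, real_inner_smul_left, hz, mul_zero, zero_add,
    real_inner_comm]

end CaseC

theorem eq_of_real_inner_eq {F : Type*} [NormedAddCommGroup F] [InnerProductSpace ℝ F]
    {x y : F} {c : ℝ} (hxx : ⟪x, x⟫ = c) (hyy : ⟪y, y⟫ = c) (hxy : ⟪x, y⟫ = c) : x = y := by
  have hyx : ⟪y, x⟫ = c := by rw [real_inner_comm]; exact hxy
  have h0 : ⟪x - y, x - y⟫ = 0 := by
    rw [inner_sub_left, inner_sub_right, inner_sub_right, hxx, hyy, hxy, hyx]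
    ring
  exact sub_eq_zero.mp (inner_self_eq_zero.mp h0)

/-- The pointwise data of Case `C_m`, with `ε`, `μ` and `τ` expressed through
`η = √(λ₁² − 4ε)/2`. -/
structure IsCaseC (ε : ℝ) (K : V →ₗ[ℝ] V →ₗ[ℝ] V) (e1 : V) (lam1 η μ τ : ℝ) : Prop where
  symm : ∀ X Y : V, K X Y = K Y X
  cubic : ∀ X Y Z : V, ⟪K X Y, Z⟫ = ⟪K X Z, Y⟫
  parallel : ∀ X Y Z U : V,
    Rc ε K X Y (K Z U) = K (Rc ε K X Y Z) U + K Z (Rc ε K X Y U)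
  norm_e1 : ‖e1‖ = 1
  K_e1_e1 : K e1 e1 = lam1 • e1
  lam1_pos : 0 < lam1
  eta_pos : 0 < η
  eps_eq : ε = lam1 ^ 2 / 4 - η ^ 2
  mu_eq : μ = lam1 / 2 - η
  tau_eq : τ = η * (η + lam1 / 2) / 4
  Lop_mem : ∀ v₁ ∈ D2s lam1 e1 K, ∀ v₂ ∈ D2s lam1 e1 K, Lop lam1 e1 K v₁ v₂ ∈ D3s μ e1 K
  K_mem : ∀ v ∈ D2s lam1 e1 K, ∀ w ∈ D3s μ e1 K, K v w ∈ D2s lam1 e1 K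

namespace IsCaseC

variable {ε lam1 η μ τ : ℝ} {e1 : V} {K : V →ₗ[ℝ] V →ₗ[ℝ] V}
  (h : IsCaseC ε K e1 lam1 η μ τ)
include h

theorem K_of_mem_D2s_e1 {b : V} (hb : b ∈ D2s lam1 e1 K) : K b e1 = (lam1 / 2) • b := by
  rw [h.symm, K_e1_of_mem_D2s hb]

theorem inner_of_mem_D2s_of_mem_D3s {z w : V} (hz : z ∈ D2s lam1 e1 K)
    (hw : w ∈ D3s μ e1 K) : ⟪z, w⟫ = 0 := by
  have hsymm : ⟪K e1 z, w⟫ = ⟪K e1 w, z⟫ := h.cubic e1 z w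
  rw [K_e1_of_mem_D2s hz, K_e1_of_mem_D3s hw, real_inner_smul_left, real_inner_smul_left,
    real_inner_comm z w, h.mu_eq] at hsymm
  have hηzw : η * ⟪z, w⟫ = 0 := by linear_combination hsymm
  exact (mul_eq_zero.mp hηzw).resolve_left h.eta_pos.ne'

theorem Rc_e1_e1_of_mem_D2s {b : V} (hb : b ∈ D2s lam1 e1 K) : Rc ε K e1 b e1 = η ^ 2 • b := by
  have hbe1 : ⟪b, e1⟫ = 0 := by rw [real_inner_comm]; exact inner_e1_of_mem_D2s hb
  have he1e1 : ⟪e1, e1⟫ = 1 := by rw [real_inner_self_eq_norm_sq, h.norm_e1, one_pow]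
  simp only [Rc, hbe1, he1e1, h.K_of_mem_D2s_e1 hb, h.K_e1_e1, map_smul,
    K_e1_of_mem_D2s hb, h.eps_eq]
  module

theorem Rc_e1_of_mem_D2s {b x : V} (hb : b ∈ D2s lam1 e1 K) (hx : x ∈ D2s lam1 e1 K) :
    Rc ε K e1 b x = (-(η ^ 2) * ⟪b, x⟫) • e1 + η • Lop lam1 e1 K b x := by
  simp only [Rc, inner_e1_of_mem_D2s hx, K_eq_smul_add_Lop (lam1 := lam1) (e1 := e1) b x,
    map_add, map_smul, h.K_e1_e1, K_e1_of_mem_D3s (h.Lop_mem b hb x hx), K_e1_of_mem_D2s hx,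
    h.eps_eq, h.mu_eq]
  module

theorem Rc_e1_of_mem_D3s {b w : V} (hb : b ∈ D2s lam1 e1 K) (hw : w ∈ D3s μ e1 K) :
    Rc ε K e1 b w = (-η) • K b w := by
  simp only [Rc, h.inner_of_mem_D2s_of_mem_D3s hb hw, inner_e1_of_mem_D3s hw,
    K_e1_of_mem_D3s hw, map_smul, K_e1_of_mem_D2s (h.K_mem b hb w hw), h.mu_eq]
  module

/-- `∇̂C = 0` evaluated at `(e₁, b, b, x)`. -/
theorem K_Lop_self {b x : V} (hb : b ∈ D2s lam1 e1 K) (hx : x ∈ D2s lam1 e1 K) :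
    K x (Lop lam1 e1 K b b) = (η * lam1 * ⟪b, x⟫) • b + (η * lam1 / 2 * ⟪b, b⟫) • x
      - (2 : ℝ) • K b (Lop lam1 e1 K b x) := by
  have hpar := h.parallel e1 b b x
  rw [K_eq_smul_add_Lop (lam1 := lam1) (e1 := e1) b x, Rc_smul_add, h.Rc_e1_e1_of_mem_D2s hb,
    h.Rc_e1_of_mem_D3s hb (h.Lop_mem b hb x hx), h.Rc_e1_of_mem_D2s hb hb,
    h.Rc_e1_of_mem_D2s hb hx] at hpar
  simp only [map_add, map_smul, LinearMap.add_apply, LinearMap.smul_apply] at hpar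
  rw [h.symm (Lop lam1 e1 K b b) x, K_e1_of_mem_D2s hx, h.K_of_mem_D2s_e1 hb] at hpar
  refine smul_right_injective V h.eta_pos.ne' ?_
  linear_combination (norm := module) -hpar

theorem K_Lop_self_self {b : V} (hb : b ∈ D2s lam1 e1 K) (hbu : ‖b‖ = 1) :
    K b (Lop lam1 e1 K b b) = (η * lam1 / 2) • b := by
  have hstar := h.K_Lop_self hb hb
  rw [real_inner_self_eq_norm_sq, hbu] at hstar
  linear_combination (norm := module) ((1 : ℝ) / 3) • hstar

theorem Rc_apply_e1_eq_zero {b x : V} (hb : b ∈ D2s lam1 e1 K) (hx : x ∈ D2s lam1 e1 K) :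
    Rc ε K b x e1 = 0 := by
  have hbe1 : ⟪b, e1⟫ = 0 := by rw [real_inner_comm]; exact inner_e1_of_mem_D2s hb
  have hxe1 : ⟪x, e1⟫ = 0 := by rw [real_inner_comm]; exact inner_e1_of_mem_D2s hx
  simp only [Rc, hbe1, hxe1, h.K_of_mem_D2s_e1 hb, h.K_of_mem_D2s_e1 hx, map_smul,
    h.symm x b]
  module

theorem K_Lop_self_of_inner_eq_zero {b x : V} (hb : b ∈ D2s lam1 e1 K) (hbu : ‖b‖ = 1)
    (hx : x ∈ D2s lam1 e1 K) (hbx : ⟪b, x⟫ = 0) :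
    K x (Lop lam1 e1 K b b) = (η * lam1 / 2) • x - (2 : ℝ) • K b (Lop lam1 e1 K b x) := by
  rw [h.K_Lop_self hb hx, hbx, real_inner_self_eq_norm_sq, hbu]
  module

theorem Rc_of_mem_D2s_self {b x : V} (hb : b ∈ D2s lam1 e1 K) (hbu : ‖b‖ = 1)
    (hx : x ∈ D2s lam1 e1 K) (hbx : ⟪b, x⟫ = 0) :
    Rc ε K b x b = (4 * τ) • x - (3 : ℝ) • K b (Lop lam1 e1 K b x) := by
  have hbb : ⟪b, b⟫ = 1 := by rw [real_inner_self_eq_norm_sq, hbu, one_pow]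
  have hxb : ⟪x, b⟫ = 0 := by rw [real_inner_comm]; exact hbx
  simp only [Rc, K_eq_smul_add_Lop (lam1 := lam1) (e1 := e1) x b,
    K_eq_smul_add_Lop (lam1 := lam1) (e1 := e1) b b, hxb, hbb, map_add, map_smul,
    h.K_of_mem_D2s_e1 hb, h.K_of_mem_D2s_e1 hx,
    h.K_Lop_self_of_inner_eq_zero hb hbu hx hbx, Lop_comm h.symm x b, h.eps_eq, h.tau_eq]
  module

theorem Rc_of_mem_D2s_Lop_self {b x : V} (hb : b ∈ D2s lam1 e1 K) (hbu : ‖b‖ = 1)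
    (hx : x ∈ D2s lam1 e1 K) (hbx : ⟪b, x⟫ = 0) :
    Rc ε K b x (Lop lam1 e1 K b b) = (2 : ℝ) • K b (K b (Lop lam1 e1 K b x)) := by
  have hLbb := h.Lop_mem b hb b hb
  simp only [Rc, h.inner_of_mem_D2s_of_mem_D3s hb hLbb, h.inner_of_mem_D2s_of_mem_D3s hx hLbb,
    h.K_Lop_self_of_inner_eq_zero hb hbu hx hbx, h.K_Lop_self_self hb hbu, map_sub, map_smul,
    h.symm x b]
  module

/-- `∇̂C = 0` evaluated at `(b, x, b, b)`; together with `inner_K_Lop_eq_zero` it gives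
`P_b² = τ P_b` on the orthogonal complement of `b` in `D₂`. -/
theorem K_K_Lop {b x : V} (hb : b ∈ D2s lam1 e1 K) (hbu : ‖b‖ = 1)
    (hx : x ∈ D2s lam1 e1 K) (hbx : ⟪b, x⟫ = 0) :
    K b (K b (Lop lam1 e1 K b x)) = τ • Lop lam1 e1 K b x := by
  have hpar := h.parallel b x b b
  rw [K_eq_smul_add_Lop (lam1 := lam1) (e1 := e1) b b, Rc_smul_add, h.Rc_apply_e1_eq_zero hb hx,
    h.Rc_of_mem_D2s_Lop_self hb hbu hx hbx, h.Rc_of_mem_D2s_self hb hbu hx hbx] at hpar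
  simp only [map_sub, map_smul, LinearMap.sub_apply, LinearMap.smul_apply, smul_zero] at hpar
  rw [h.symm x b, h.symm (K b (Lop lam1 e1 K b x)) b,
    K_eq_smul_add_Lop (lam1 := lam1) (e1 := e1) b x, hbx] at hpar
  linear_combination (norm := module) ((1 : ℝ) / 8) • hpar

theorem tau_pos : 0 < τ := by
  rw [h.tau_eq]
  have := h.eta_pos
  have := h.lam1_pos
  positivity

theorem inner_K_Lop {b x : V} (hb : b ∈ D2s lam1 e1 K) (hx : x ∈ D2s lam1 e1 K) (a y : V) :
    ⟪K a (Lop lam1 e1 K b x), y⟫ = ⟪Lop lam1 e1 K b x, Lop lam1 e1 K a y⟫ :=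
  inner_K_eq_inner_Lop h.cubic (inner_e1_of_mem_D3s (h.Lop_mem b hb x hx)) a y

theorem inner_K_Lop_eq_zero {b x : V} (hb : b ∈ D2s lam1 e1 K) (hbu : ‖b‖ = 1)
    (hx : x ∈ D2s lam1 e1 K) (hbx : ⟪b, x⟫ = 0) : ⟪b, K b (Lop lam1 e1 K b x)⟫ = 0 := by
  have he1 : ⟪K b (K b (Lop lam1 e1 K b x)), e1⟫ = 0 := by
    rw [h.K_K_Lop hb hbu hx hbx, real_inner_smul_left, real_inner_comm,
      inner_e1_of_mem_D3s (h.Lop_mem b hb x hx), mul_zero]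
  rw [h.cubic, h.K_of_mem_D2s_e1 hb, real_inner_smul_left] at he1
  exact (mul_eq_zero.mp he1).resolve_left (by linarith [h.lam1_pos])

theorem Lop_K_Lop {b x : V} (hb : b ∈ D2s lam1 e1 K) (hbu : ‖b‖ = 1)
    (hx : x ∈ D2s lam1 e1 K) (hbx : ⟪b, x⟫ = 0) :
    Lop lam1 e1 K b (K b (Lop lam1 e1 K b x)) = τ • Lop lam1 e1 K b x := by
  rw [Lop, h.K_K_Lop hb hbu hx hbx, h.inner_K_Lop_eq_zero hb hbu hx hbx, mul_zero, zero_smul,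
    sub_zero]

/-- `‖P_b x‖² = ⟨P_b² x, x⟩ = τ ⟨P_b x, x⟩ = τ²`, so `P_b x` and `τ x` have the same norm and
their inner product attains it. -/
theorem K_Lop_eq_smul_of_inner_eq {b x : V} (hb : b ∈ D2s lam1 e1 K) (hbu : ‖b‖ = 1)
    (hx : x ∈ D2s lam1 e1 K) (hxu : ‖x‖ = 1) (hbx : ⟪b, x⟫ = 0)
    (hPx : ⟪K b (Lop lam1 e1 K b x), x⟫ = τ) : K b (Lop lam1 e1 K b x) = τ • x := by
  have hLL : ⟪Lop lam1 e1 K b x, Lop lam1 e1 K b x⟫ = τ := by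
    rw [← h.inner_K_Lop hb hx]; exact hPx
  refine eq_of_real_inner_eq (c := τ ^ 2) ?_ ?_ ?_
  · rw [h.inner_K_Lop hb hx, h.Lop_K_Lop hb hbu hx hbx, real_inner_smul_right, hLL, sq]
  · rw [real_inner_smul_left, real_inner_smul_right, real_inner_self_eq_norm_sq, hxu]
    ring
  · rw [real_inner_smul_right, hPx, sq]

theorem inner_Lop_self_eq_iff_mem_Vvs {v x : V} (hv : v ∈ D2s lam1 e1 K) (hvu : ‖v‖ = 1)
    (hx : x ∈ D2s lam1 e1 K) (hxu : ‖x‖ = 1) (hvx : ⟪v, x⟫ = 0) :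
    ⟪Lop lam1 e1 K v x, Lop lam1 e1 K v x⟫ = τ ↔ x ∈ Vvs lam1 τ e1 K v := by
  rw [mem_Vvs_iff, ← h.inner_K_Lop hv hx]
  refine ⟨fun hPx => ⟨hx, hvx, h.K_Lop_eq_smul_of_inner_eq hv hvu hx hxu hvx hPx⟩, ?_⟩
  rintro ⟨-, -, hPx⟩
  rw [hPx, real_inner_smul_left, real_inner_self_eq_norm_sq, hxu, one_pow, mul_one]

theorem Lop_eq_zero_of_mem_Vvs_zero {v w : V} (hv : v ∈ D2s lam1 e1 K)
    (hw : w ∈ Vvs lam1 0 e1 K v) : Lop lam1 e1 K v w = 0 := by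
  obtain ⟨hwD2, -, hPw⟩ := mem_Vvs_iff.mp hw
  rw [← inner_self_eq_zero (𝕜 := ℝ), ← h.inner_K_Lop hv hwD2, hPw, zero_smul, inner_zero_left]

theorem inner_Lop_self_self_Lop_self_self {v w : V} (hvu : ‖v‖ = 1)
    (hw : w ∈ D2s lam1 e1 K) {c : ℝ}
    (hKv : K v (Lop lam1 e1 K w w) = c • v) : ⟪Lop lam1 e1 K w w, Lop lam1 e1 K v v⟫ = c := by
  rw [← h.inner_K_Lop hw hw, hKv, real_inner_smul_left, real_inner_self_eq_norm_sq, hvu,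
    one_pow, mul_one]

theorem Lop_self_self_eq_of_Lop_eq_zero {v w : V} (hv : v ∈ D2s lam1 e1 K) (hvu : ‖v‖ = 1)
    (hw : w ∈ D2s lam1 e1 K) (hwu : ‖w‖ = 1) (hvw : ⟪v, w⟫ = 0)
    (hLvw : Lop lam1 e1 K v w = 0) : Lop lam1 e1 K w w = Lop lam1 e1 K v v := by
  have hKvLww : K v (Lop lam1 e1 K w w) = (η * lam1 / 2) • v := by
    rw [h.K_Lop_self_of_inner_eq_zero hw hwu hv (by rw [real_inner_comm]; exact hvw),
      Lop_comm h.symm, hLvw, map_zero, smul_zero, sub_zero]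
  exact eq_of_real_inner_eq (h.inner_Lop_self_self_Lop_self_self hwu hw (h.K_Lop_self_self hw hwu))
    (h.inner_Lop_self_self_Lop_self_self hvu hv (h.K_Lop_self_self hv hvu))
    (h.inner_Lop_self_self_Lop_self_self hvu hw hKvLww)

theorem mem_Vvs_of_mem_Vvs_zero {v x w : V} (hv : v ∈ D2s lam1 e1 K) (hvu : ‖v‖ = 1)
    (hxu : ‖x‖ = 1) (hvx : ⟪v, x⟫ = 0) (hx : x ∈ Vvs lam1 τ e1 K v) (hwu : ‖w‖ = 1)
    (hw : w ∈ Vvs lam1 0 e1 K v) : w ∈ Vvs lam1 τ e1 K x := by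
  obtain ⟨hxD2, -, hPx⟩ := mem_Vvs_iff.mp hx
  obtain ⟨hwD2, hvw, -⟩ := mem_Vvs_iff.mp hw
  have hLvw := h.Lop_eq_zero_of_mem_Vvs_zero hv hw
  have hxw : ⟪x, w⟫ = 0 := by
    have hPxw := h.inner_K_Lop hv hxD2 v w
    rw [hPx, hLvw, inner_zero_right, real_inner_smul_left] at hPxw
    exact (mul_eq_zero.mp hPxw).resolve_left h.tau_pos.ne'
  have hLxxLvv : ⟪Lop lam1 e1 K x x, Lop lam1 e1 K v v⟫ = η * lam1 / 2 - 2 * τ := by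
    rw [real_inner_comm]
    refine h.inner_Lop_self_self_Lop_self_self hxu hv ?_
    rw [h.K_Lop_self_of_inner_eq_zero hv hvu hxD2 hvx, hPx]
    module
  have hPw : ⟪K x (Lop lam1 e1 K x w), w⟫ = τ := by
    have hstar := congrArg (fun z => ⟪z, w⟫) (h.K_Lop_self_of_inner_eq_zero hxD2 hxu hwD2 hxw)
    simp only [h.inner_K_Lop hxD2 hxD2 w w,
      h.Lop_self_self_eq_of_Lop_eq_zero hv hvu hwD2 hwu hvw hLvw, hLxxLvv, inner_sub_left,
      real_inner_smul_left, real_inner_self_eq_norm_sq, hwu] at hstar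
    linarith
  exact mem_Vvs_iff.mpr ⟨hwD2, hxw, h.K_Lop_eq_smul_of_inner_eq hxD2 hxu hwD2 hwu hxw hPw⟩

end IsCaseC

theorem stmt_12_general {V : Type*} [NormedAddCommGroup V] [InnerProductSpace ℝ V]
    (ε : ℝ)
    (K : V →ₗ[ℝ] V →ₗ[ℝ] V)
    (hKsymm : ∀ X Y : V, K X Y = K Y X)
    (hKcub : ∀ X Y Z : V, ⟪K X Y, Z⟫ = ⟪K X Z, Y⟫)
    (hpar : ∀ X Y Z U : V,
      Rc ε K X Y (K Z U) = K (Rc ε K X Y Z) U + K Z (Rc ε K X Y U))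
    (e1 : V) (he1 : ‖e1‖ = 1)
    (lam1 η μ τ : ℝ)
    (hlam1 : lam1 = ⟪K e1 e1, e1⟫) (hlam1pos : 0 < lam1)
    (hdisc : 0 < lam1 ^ 2 - 4 * ε)
    (hη : η = Real.sqrt (lam1 ^ 2 - 4 * ε) / 2)
    (hμ : μ = (lam1 - Real.sqrt (lam1 ^ 2 - 4 * ε)) / 2)
    (hτ : τ = η * (η + lam1 / 2) / 4)
    (hsplit : (ℝ ∙ e1) ⊔ D2s lam1 e1 K ⊔ D3s μ e1 K = ⊤)
    (hLD3 : ∀ v1 ∈ D2s lam1 e1 K, ∀ v2 ∈ D2s lam1 e1 K,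
      Lop lam1 e1 K v1 v2 ∈ D3s μ e1 K)
    (hKD2 : ∀ v ∈ D2s lam1 e1 K, ∀ w ∈ D3s μ e1 K, K v w ∈ D2s lam1 e1 K)
    (v vt : V) (hv : v ∈ D2s lam1 e1 K) (hvt : vt ∈ D2s lam1 e1 K)
    (hvu : ‖v‖ = 1) (hvtu : ‖vt‖ = 1) (horth : ⟪v, vt⟫ = 0) :
    (⟪Lop lam1 e1 K v vt, Lop lam1 e1 K v vt⟫ = τ ↔ vt ∈ Vvs lam1 τ e1 K v) ∧
    (∀ w : V, ‖w‖ = 1 → w ∈ Vvs lam1 0 e1 K v →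
      ⟪Lop lam1 e1 K v vt, Lop lam1 e1 K v vt⟫ = τ → w ∈ Vvs lam1 τ e1 K vt) := by
  have hsqrt : Real.sqrt (lam1 ^ 2 - 4 * ε) ^ 2 = lam1 ^ 2 - 4 * ε := Real.sq_sqrt hdisc.le
  have h : IsCaseC ε K e1 lam1 η μ τ :=
    { symm := hKsymm
      cubic := hKcub
      parallel := hpar
      norm_e1 := he1
      K_e1_e1 := by rw [hlam1]; exact K_e1_e1_eq_of_sup_eq_top hKcub he1 hsplit
      lam1_pos := hlam1pos
      eta_pos := by rw [hη]; exact half_pos (Real.sqrt_pos.mpr hdisc)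
      eps_eq := by rw [hη, div_pow, hsqrt]; ring
      mu_eq := by rw [hμ, hη]; ring
      tau_eq := hτ
      Lop_mem := hLD3
      K_mem := hKD2 }
  have hiff := h.inner_Lop_self_eq_iff_mem_Vvs hv hvu hvt hvtu horth
  exact ⟨hiff, fun w hwu hw hτvt =>
    h.mem_Vvs_of_mem_Vvs_zero hv hvu hvtu horth (hiff.mp hτvt) hwu hw⟩

/-- Lemma 4.10: for orthogonal unit vectors `v, ṽ ∈ D₂`, one has
`⟨L(v,ṽ),L(v,ṽ)⟩ = τ` iff `ṽ ∈ V_v(τ)`; moreover if `u ∈ V_v(0)` is a unit vector and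
the equality holds, then `u ∈ V_ṽ(τ)`. -/
theorem stmt_12 {V : Type*} [NormedAddCommGroup V] [InnerProductSpace ℝ V]
    (n m : ℕ) (hn : finrank ℝ V = n) (hn2 : 2 ≤ n)
    (ε : ℝ) (hε : ε = 1 ∨ ε = -1)
    (K : V →ₗ[ℝ] V →ₗ[ℝ] V)
    (hKsymm : ∀ X Y : V, K X Y = K Y X)
    (hKcub : ∀ X Y Z : V, ⟪K X Y, Z⟫ = ⟪K X Z, Y⟫)
    (hpar : ∀ X Y Z U : V,
      Rc ε K X Y (K Z U) = K (Rc ε K X Y Z) U + K Z (Rc ε K X Y U))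
    (e1 : V) (he1 : ‖e1‖ = 1)
    (lam1 η μ τ : ℝ)
    (hlam1 : lam1 = ⟪K e1 e1, e1⟫) (hlam1pos : 0 < lam1)
    (hmax : ∀ u : V, ‖u‖ = 1 → ⟪K u u, u⟫ ≤ lam1)
    (hdisc : 0 < lam1 ^ 2 - 4 * ε)
    (hη : η = Real.sqrt (lam1 ^ 2 - 4 * ε) / 2)
    (hμ : μ = (lam1 - Real.sqrt (lam1 ^ 2 - 4 * ε)) / 2)
    (hτ : τ = η * (η + lam1 / 2) / 4)
    (hm2 : 2 ≤ m) (hmn : m ≤ n - 1)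
    (hdimD2 : finrank ℝ (D2s lam1 e1 K) = m - 1)
    (hsplit : (ℝ ∙ e1) ⊔ D2s lam1 e1 K ⊔ D3s μ e1 K = ⊤)
    (hLD3 : ∀ v1 ∈ D2s lam1 e1 K, ∀ v2 ∈ D2s lam1 e1 K,
      Lop lam1 e1 K v1 v2 ∈ D3s μ e1 K)
    (hKD2 : ∀ v ∈ D2s lam1 e1 K, ∀ w ∈ D3s μ e1 K, K v w ∈ D2s lam1 e1 K)
    (v vt : V) (hv : v ∈ D2s lam1 e1 K) (hvt : vt ∈ D2s lam1 e1 K)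
    (hvu : ‖v‖ = 1) (hvtu : ‖vt‖ = 1) (horth : ⟪v, vt⟫ = 0) :
    (⟪Lop lam1 e1 K v vt, Lop lam1 e1 K v vt⟫ = τ ↔ vt ∈ Vvs lam1 τ e1 K v) ∧
    (∀ w : V, ‖w‖ = 1 → w ∈ Vvs lam1 0 e1 K v →
      ⟪Lop lam1 e1 K v vt, Lop lam1 e1 K v vt⟫ = τ → w ∈ Vvs lam1 τ e1 K vt) :=
  stmt_12_general ε K hKsymm hKcub hpar e1 he1 lam1 η μ τ hlam1 hlam1pos hdisc hη hμ hτ hsplit hLD3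
    hKD2 v vt hv hvt hvu hvtu horth

end
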